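/- Let φ = (φ_1,…,φ_n) : 𝔻ⁿ → 𝔻ⁿ be holomorphic and suppose C_φ is an isometry on the Bloch space of 𝔻ⁿ. Then: (a) the component functions φ_1,…,φ_n are linearly independent over ℂ; (b) φ(0) = 0; (c) each component φ_j has Bloch seminorm β_{φ_j} = 1. -/

import Mathlib

open Complex Metric Set

/-- The unit polydisk `𝔻ⁿ = { z ∈ ℂⁿ : |z_k| < 1 for all k }`. -/
def polydisk (n : ℕ) : Set (Fin n → ℂ) := {z | ∀ k, ‖z k‖ < 1}

/-- The Bergman metric on the polydisk: `H_z(u,ū) = Σ_k |u_k|²/(1−|z_k|²)²`. -/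
noncomputable def polyH (n : ℕ) (z u : Fin n → ℂ) : ℝ :=
  ∑ k, ‖u k‖ ^ 2 / (1 - ‖z k‖ ^ 2) ^ 2

/-- `Q_f(z) = sup_{u ≠ 0} |f'(z)u| / H_z(u,ū)^{1/2}` on the polydisk. -/
noncomputable def Qpoly (n : ℕ) (f : (Fin n → ℂ) → ℂ) (z : Fin n → ℂ) : ℝ :=
  sSup {r : ℝ | ∃ u : Fin n → ℂ, u ≠ 0 ∧
    r = ‖fderiv ℂ f z u‖ / Real.sqrt (polyH n z u)}

/-- The set of values `Q_f(z)` for `z ∈ 𝔻ⁿ`. -/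
def blochValuesPoly (n : ℕ) (f : (Fin n → ℂ) → ℂ) : Set ℝ :=
  {r : ℝ | ∃ z ∈ polydisk n, r = Qpoly n f z}

/-- The Bloch seminorm `β_f = sup_{z ∈ 𝔻ⁿ} Q_f(z)`. -/
noncomputable def blochSemiPoly (n : ℕ) (f : (Fin n → ℂ) → ℂ) : ℝ :=
  sSup (blochValuesPoly n f)

/-- `f` is a Bloch function on the polydisk. -/
def IsBlochPoly (n : ℕ) (f : (Fin n → ℂ) → ℂ) : Prop :=
  DifferentiableOn ℂ f (polydisk n) ∧ BddAbove (blochValuesPoly n f)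

/-- The Bloch norm `‖f‖_B = |f(0)| + β_f` on the polydisk. -/
noncomputable def blochNormPoly (n : ℕ) (f : (Fin n → ℂ) → ℂ) : ℝ :=
  ‖f 0‖ + blochSemiPoly n f

/-!
Schwarz–Pick on the polydisk: through every `z ∈ 𝔻ⁿ` and in every direction `u` there is an
analytic disc `γ` with `γ 0 = z`, `γ' 0 = u / √H_z(u,ū)`, built coordinatewise from disc
automorphisms. For holomorphic `h : 𝔻ⁿ → 𝔻`, the one-variable Schwarz–Pick lemma applied to `h ∘ γ`
gives `Q_h(z) ≤ 1 - |h z|²`, so `β_h ≤ 1`. The coordinates `z_j` and their Möbius transforms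
`(a - z_j) / (1 - ā z_j)` attain `Q = 1`, hence have `β = 1`.

With `a = φ_j(0)`, the Möbius coordinate `g` has norm `|a| + 1`, while `g ∘ φ` vanishes at `0` and
maps into the disc, so its norm is at most `1`: thus `φ(0) = 0`, and then the coordinate `z_j`
gives `β_{φ_j} = 1`. A relation `∑ c_j φ_j = 0` composes the linear function `∑ c_j z_j`, whose
Bloch norm is at least `max |c_j|`, to `0`.
-/

open ComplexConjugate

noncomputable def diskMobius (a w : ℂ) : ℂ := (a - w) / (1 - conj a * w)

section DiskMobius

variable {a w : ℂ}

theorem one_sub_conj_mul_ne_zero (ha : ‖a‖ < 1) (hw : ‖w‖ < 1) : 1 - conj a * w ≠ 0 := by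
  have h : ‖conj a * w‖ < 1 := by
    rw [norm_mul, RCLike.norm_conj]
    nlinarith [norm_nonneg a, norm_nonneg w]
  refine sub_ne_zero.2 fun h1 => ?_
  rw [← h1, norm_one] at h
  exact lt_irrefl _ h

theorem norm_one_sub_conj_mul_sq_sub_norm_sub_sq (a w : ℂ) :
    ‖1 - conj a * w‖ ^ 2 - ‖a - w‖ ^ 2 = (1 - ‖a‖ ^ 2) * (1 - ‖w‖ ^ 2) := by
  simp only [Complex.sq_norm, normSq_apply, sub_re, sub_im, mul_re, mul_im,
    one_re, one_im, conj_re, conj_im]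
  ring

theorem norm_one_sub_conj_mul_self (ha : ‖a‖ < 1) : ‖1 - conj a * a‖ = 1 - ‖a‖ ^ 2 := by
  have h : 1 - conj a * a = ((1 - ‖a‖ ^ 2 : ℝ) : ℂ) := by
    rw [← normSq_eq_conj_mul_self, normSq_eq_norm_sq]
    push_cast
    ring
  rw [h, Complex.norm_real, Real.norm_of_nonneg]
  nlinarith [norm_nonneg a]

theorem norm_diskMobius_lt_one (ha : ‖a‖ < 1) (hw : ‖w‖ < 1) : ‖diskMobius a w‖ < 1 := by
  have hd : 0 < ‖1 - conj a * w‖ := norm_pos_iff.2 (one_sub_conj_mul_ne_zero ha hw)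
  have hid := norm_one_sub_conj_mul_sq_sub_norm_sub_sq a w
  have hpos : 0 < (1 - ‖a‖ ^ 2) * (1 - ‖w‖ ^ 2) := by
    apply mul_pos <;> nlinarith [norm_nonneg a, norm_nonneg w]
  rw [diskMobius, norm_div, div_lt_one hd]
  exact lt_of_pow_lt_pow_left₀ 2 hd.le (by linarith)

theorem diskMobius_self (a : ℂ) : diskMobius a a = 0 := by simp [diskMobius]

theorem diskMobius_zero (a : ℂ) : diskMobius a 0 = a := by simp [diskMobius]

theorem hasDerivAt_diskMobius (a : ℂ) (hw : 1 - conj a * w ≠ 0) :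
    HasDerivAt (diskMobius a) ((conj a * a - 1) / (1 - conj a * w) ^ 2) w := by
  have hnum : HasDerivAt (fun w : ℂ => a - w) (-1) w := by
    simpa using (hasDerivAt_id w).const_sub a
  have hden : HasDerivAt (fun w : ℂ => 1 - conj a * w) (-conj a) w := by
    simpa using ((hasDerivAt_id w).const_mul (conj a)).const_sub 1
  exact (hnum.div hden hw).congr_deriv (by ring)

theorem hasDerivAt_diskMobius_self (ha : ‖a‖ < 1) :
    HasDerivAt (diskMobius a) (-(1 - conj a * a)⁻¹) a := by
  have hd := one_sub_conj_mul_ne_zero ha ha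
  convert hasDerivAt_diskMobius a hd using 1
  rw [show conj a * a - 1 = -(1 - conj a * a) by ring]
  field_simp

theorem differentiableOn_diskMobius (ha : ‖a‖ < 1) :
    DifferentiableOn ℂ (diskMobius a) (ball 0 1) :=
  fun _ hw => (hasDerivAt_diskMobius a
    (one_sub_conj_mul_ne_zero ha (mem_ball_zero_iff.1 hw))).differentiableAt.differentiableWithinAt

theorem mapsTo_diskMobius (ha : ‖a‖ < 1) : MapsTo (diskMobius a) (ball 0 1) (ball 0 1) :=
  fun _ hw => mem_ball_zero_iff.2 (norm_diskMobius_lt_one ha (mem_ball_zero_iff.1 hw))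

end DiskMobius

theorem norm_deriv_le_one_sub_sq_of_mapsTo_ball {F : ℂ → ℂ}
    (hd : DifferentiableOn ℂ F (ball 0 1)) (hm : MapsTo F (ball 0 1) (ball 0 1)) :
    ‖deriv F 0‖ ≤ 1 - ‖F 0‖ ^ 2 := by
  have h0 : (0 : ℂ) ∈ ball (0 : ℂ) 1 := mem_ball_self one_pos
  set a := F 0
  have ha : ‖a‖ < 1 := mem_ball_zero_iff.1 (hm h0)
  have hG : HasDerivAt (diskMobius a ∘ F) (-(1 - conj a * a)⁻¹ * deriv F 0) 0 :=
    (hasDerivAt_diskMobius_self ha).comp 0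
      (hd.differentiableAt (isOpen_ball.mem_nhds h0)).hasDerivAt
  -- `diskMobius a` moves `F 0` to the centre, where Schwarz's lemma applies
  have hSchwarz : ‖deriv (diskMobius a ∘ F) 0‖ ≤ 1 := by
    refine norm_deriv_le_one_of_mapsTo_ball ((differentiableOn_diskMobius ha).comp hd hm)
      (fun ζ hζ => ?_) one_pos
    rw [Function.comp_apply, diskMobius_self, mem_closedBall, dist_zero_right]
    exact (mem_ball_zero_iff.1 (mapsTo_diskMobius ha (hm hζ))).le
  have hpos : 0 < 1 - ‖a‖ ^ 2 := by nlinarith [norm_nonneg a]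
  rwa [hG.deriv, norm_mul, norm_neg, norm_inv, norm_one_sub_conj_mul_self ha,
    inv_mul_le_iff₀ hpos, mul_one] at hSchwarz

section Polydisk

variable {n : ℕ} {z : Fin n → ℂ}

theorem isOpen_polydisk (n : ℕ) : IsOpen (polydisk n) := by
  have h : polydisk n = univ.pi fun _ => ball (0 : ℂ) 1 := by
    ext z
    simp [polydisk]
  rw [h]
  exact isOpen_set_pi finite_univ fun _ _ => isOpen_ball

theorem zero_mem_polydisk (n : ℕ) : (0 : Fin n → ℂ) ∈ polydisk n := by
  simp [polydisk]

theorem single_mem_polydisk {w : ℂ} (hw : ‖w‖ < 1) (j : Fin n) : Pi.single j w ∈ polydisk n := by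
  intro k
  rcases eq_or_ne k j with rfl | hk
  · simpa using hw
  · simp [Pi.single_eq_of_ne hk]

theorem mapsTo_apply_polydisk (j : Fin n) :
    MapsTo (fun z : Fin n → ℂ => z j) (polydisk n) (ball 0 1) :=
  fun _ hz => mem_ball_zero_iff.2 (hz j)

theorem one_sub_norm_sq_pos (hz : z ∈ polydisk n) (k : Fin n) : 0 < 1 - ‖z k‖ ^ 2 := by
  nlinarith [hz k, norm_nonneg (z k)]

theorem polyH_nonneg (z u : Fin n → ℂ) : 0 ≤ polyH n z u :=
  Finset.sum_nonneg fun _ _ => by positivity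

theorem polyH_pos (hz : z ∈ polydisk n) {u : Fin n → ℂ} (hu : u ≠ 0) : 0 < polyH n z u := by
  obtain ⟨k, hk⟩ := Function.ne_iff.1 hu
  have hzk := one_sub_norm_sq_pos hz k
  have huk := norm_pos_iff.2 hk
  exact Finset.sum_pos' (fun k _ => by positivity) ⟨k, Finset.mem_univ k, by positivity⟩

theorem norm_apply_le_mul_sqrt_polyH (hz : z ∈ polydisk n) (u : Fin n → ℂ) (k : Fin n) :
    ‖u k‖ ≤ (1 - ‖z k‖ ^ 2) * √(polyH n z u) := by
  have hk := one_sub_norm_sq_pos hz k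
  rw [← div_le_iff₀' hk, Real.le_sqrt (by positivity) (polyH_nonneg z u), div_pow]
  exact Finset.single_le_sum (f := fun k => ‖u k‖ ^ 2 / (1 - ‖z k‖ ^ 2) ^ 2)
    (fun _ _ => by positivity) (Finset.mem_univ k)

theorem sqrt_polyH_single (hz : z ∈ polydisk n) (j : Fin n) :
    √(polyH n z (Pi.single j 1)) = (1 - ‖z j‖ ^ 2)⁻¹ := by
  rw [polyH, Finset.sum_eq_single j (fun k _ hk => by simp [hk]) (by simp), Pi.single_eq_same,
    norm_one, one_pow, one_div, ← inv_pow,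
    Real.sqrt_sq (inv_nonneg.2 (one_sub_norm_sq_pos hz j).le)]

theorem exists_disc_mapsTo_polydisk (hz : z ∈ polydisk n) {v : Fin n → ℂ}
    (hv : ∀ k, ‖v k‖ ≤ 1 - ‖z k‖ ^ 2) :
    ∃ γ : ℂ → Fin n → ℂ, MapsTo γ (ball 0 1) (polydisk n) ∧
      DifferentiableOn ℂ γ (ball 0 1) ∧ γ 0 = z ∧ HasDerivAt γ v 0 := by
  set b : Fin n → ℂ := fun k => -(v k / (1 - conj (z k) * z k))
  have hb : ∀ k, ‖b k‖ ≤ 1 := fun k => by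
    simp only [b, norm_neg, norm_div, norm_one_sub_conj_mul_self (hz k)]
    exact div_le_one_of_le₀ (hv k) (one_sub_norm_sq_pos hz k).le
  have hsmall : ∀ ζ ∈ ball (0 : ℂ) 1, ∀ k, ‖ζ * b k‖ < 1 := fun ζ hζ k => by
    rw [norm_mul]
    exact (mul_le_of_le_one_right (norm_nonneg ζ) (hb k)).trans_lt (mem_ball_zero_iff.1 hζ)
  have hγ : ∀ ζ ∈ ball (0 : ℂ) 1, ∀ k, HasDerivAt (diskMobius (z k) ∘ (· * b k))
      ((conj (z k) * z k - 1) / (1 - conj (z k) * (ζ * b k)) ^ 2 * b k) ζ := fun ζ hζ k =>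
    (hasDerivAt_diskMobius (z k) (one_sub_conj_mul_ne_zero (hz k) (hsmall ζ hζ k))).comp ζ
      (hasDerivAt_mul_const (b k))
  refine ⟨fun ζ k => diskMobius (z k) (ζ * b k),
    fun ζ hζ k => norm_diskMobius_lt_one (hz k) (hsmall ζ hζ k),
    fun ζ hζ =>
      (differentiableAt_pi.2 fun k => (hγ ζ hζ k).differentiableAt).differentiableWithinAt,
    by funext k; simp [diskMobius],
    hasDerivAt_pi.2 fun k => (hγ 0 (mem_ball_self one_pos) k).congr_deriv ?_⟩
  have hd : 1 - conj (z k) * z k ≠ 0 := one_sub_conj_mul_ne_zero (hz k) (hz k)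
  simp only [b, zero_mul, mul_zero, sub_zero, one_pow, div_one]
  field_simp
  ring

theorem norm_fderiv_le_of_mapsTo_ball {h : (Fin n → ℂ) → ℂ}
    (hd : DifferentiableOn ℂ h (polydisk n)) (hm : MapsTo h (polydisk n) (ball 0 1))
    (hz : z ∈ polydisk n) (u : Fin n → ℂ) :
    ‖fderiv ℂ h z u‖ ≤ (1 - ‖h z‖ ^ 2) * √(polyH n z u) := by
  rcases eq_or_ne u 0 with rfl | hu
  · rw [map_zero, norm_zero]
    have hhz := mem_ball_zero_iff.1 (hm hz)
    exact mul_nonneg (by nlinarith [norm_nonneg (h z)]) (Real.sqrt_nonneg _)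
  set K := √(polyH n z u)
  have hK : 0 < K := Real.sqrt_pos.2 (polyH_pos hz hu)
  have hv : ∀ k, ‖((K : ℂ)⁻¹ • u) k‖ ≤ 1 - ‖z k‖ ^ 2 := fun k => by
    rw [Pi.smul_apply, smul_eq_mul, norm_mul, norm_inv, Complex.norm_real,
      Real.norm_of_nonneg hK.le, inv_mul_le_iff₀ hK, mul_comm]
    exact norm_apply_le_mul_sqrt_polyH hz u k
  obtain ⟨γ, hγm, hγd, hγ0, hγ'⟩ := exists_disc_mapsTo_polydisk hz hv
  have hF : HasDerivAt (h ∘ γ) (fderiv ℂ h z ((K : ℂ)⁻¹ • u)) 0 := by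
    have hhz := (hd z hz).differentiableAt ((isOpen_polydisk n).mem_nhds hz)
    rw [← hγ0] at hhz ⊢
    exact hhz.hasFDerivAt.comp_hasDerivAt 0 hγ'
  have hSP := norm_deriv_le_one_sub_sq_of_mapsTo_ball (hd.comp hγd hγm) (hm.comp hγm)
  rwa [hF.deriv, Function.comp_apply, hγ0, map_smul, norm_smul, norm_inv, Complex.norm_real,
    Real.norm_of_nonneg hK.le, inv_mul_le_iff₀ hK, mul_comm] at hSP

variable {f : (Fin n → ℂ) → ℂ} {M : ℝ}

theorem Qpoly_le_of_le (hM : 0 ≤ M) (h : ∀ u, ‖fderiv ℂ f z u‖ ≤ M * √(polyH n z u)) :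
    Qpoly n f z ≤ M :=
  Real.sSup_le (by rintro r ⟨u, -, rfl⟩; exact div_le_of_le_mul₀ (Real.sqrt_nonneg _) hM (h u)) hM

theorem norm_fderiv_single_mul_le_Qpoly (hz : z ∈ polydisk n)
    (h : ∀ u, ‖fderiv ℂ f z u‖ ≤ M * √(polyH n z u)) (j : Fin n) :
    ‖fderiv ℂ f z (Pi.single j 1)‖ * (1 - ‖z j‖ ^ 2) ≤ Qpoly n f z := by
  refine le_csSup ⟨M, ?_⟩ ⟨Pi.single j 1, by simp, by rw [sqrt_polyH_single hz, div_inv_eq_mul]⟩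
  rintro r ⟨u, hu, rfl⟩
  exact (div_le_iff₀ (Real.sqrt_pos.2 (polyH_pos hz hu))).2 (h u)

theorem bddAbove_blochValuesPoly (h : ∀ z ∈ polydisk n, Qpoly n f z ≤ M) :
    BddAbove (blochValuesPoly n f) :=
  ⟨M, by rintro r ⟨z, hz, rfl⟩; exact h z hz⟩

theorem blochSemiPoly_le_of_le (hM : 0 ≤ M) (h : ∀ z ∈ polydisk n, Qpoly n f z ≤ M) :
    blochSemiPoly n f ≤ M :=
  Real.sSup_le (by rintro r ⟨z, hz, rfl⟩; exact h z hz) hM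

theorem Qpoly_le_blochSemiPoly (hf : IsBlochPoly n f) (hz : z ∈ polydisk n) :
    Qpoly n f z ≤ blochSemiPoly n f :=
  le_csSup hf.2 ⟨z, hz, rfl⟩

theorem blochSemiPoly_nonneg (f : (Fin n → ℂ) → ℂ) : 0 ≤ blochSemiPoly n f :=
  Real.sSup_nonneg fun _ ⟨_, _, hr⟩ => hr ▸ Real.sSup_nonneg fun _ ⟨_, _, hs⟩ =>
    hs ▸ div_nonneg (norm_nonneg _) (Real.sqrt_nonneg _)

theorem blochSemiPoly_eq_zero_of_eqOn (hf : EqOn f 0 (polydisk n)) : blochSemiPoly n f = 0 := by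
  refine le_antisymm (blochSemiPoly_le_of_le le_rfl fun z hz => Qpoly_le_of_le le_rfl fun u => ?_)
    (blochSemiPoly_nonneg f)
  rw [(hf.eventuallyEq_of_mem ((isOpen_polydisk n).mem_nhds hz)).fderiv_eq]
  simp

end Polydisk

section TestFunctions

variable {n : ℕ}

theorem Qpoly_le_one_sub_sq_of_mapsTo_ball {h : (Fin n → ℂ) → ℂ} {z : Fin n → ℂ}
    (hd : DifferentiableOn ℂ h (polydisk n)) (hm : MapsTo h (polydisk n) (ball 0 1))
    (hz : z ∈ polydisk n) : Qpoly n h z ≤ 1 - ‖h z‖ ^ 2 :=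
  Qpoly_le_of_le (by nlinarith [mem_ball_zero_iff.1 (hm hz), norm_nonneg (h z)])
    (norm_fderiv_le_of_mapsTo_ball hd hm hz)

theorem Qpoly_le_one_of_mapsTo_ball {h : (Fin n → ℂ) → ℂ} {z : Fin n → ℂ}
    (hd : DifferentiableOn ℂ h (polydisk n)) (hm : MapsTo h (polydisk n) (ball 0 1))
    (hz : z ∈ polydisk n) : Qpoly n h z ≤ 1 :=
  (Qpoly_le_one_sub_sq_of_mapsTo_ball hd hm hz).trans (sub_le_self 1 (sq_nonneg _))

theorem isBlochPoly_of_mapsTo_ball {h : (Fin n → ℂ) → ℂ}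
    (hd : DifferentiableOn ℂ h (polydisk n)) (hm : MapsTo h (polydisk n) (ball 0 1)) :
    IsBlochPoly n h :=
  ⟨hd, bddAbove_blochValuesPoly fun _ hz => Qpoly_le_one_of_mapsTo_ball hd hm hz⟩

theorem blochSemiPoly_le_one_of_mapsTo_ball {h : (Fin n → ℂ) → ℂ}
    (hd : DifferentiableOn ℂ h (polydisk n)) (hm : MapsTo h (polydisk n) (ball 0 1)) :
    blochSemiPoly n h ≤ 1 :=
  blochSemiPoly_le_of_le zero_le_one fun _ hz => Qpoly_le_one_of_mapsTo_ball hd hm hz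

theorem isBlochPoly_comp_apply {ψ : ℂ → ℂ} (hd : DifferentiableOn ℂ ψ (ball 0 1))
    (hm : MapsTo ψ (ball 0 1) (ball 0 1)) (j : Fin n) :
    IsBlochPoly n fun z : Fin n → ℂ => ψ (z j) :=
  isBlochPoly_of_mapsTo_ball (hd.comp (differentiableOn_apply j _) (mapsTo_apply_polydisk j))
    (hm.comp (mapsTo_apply_polydisk j))

theorem blochSemiPoly_comp_apply_eq_one {ψ : ℂ → ℂ} (hd : DifferentiableOn ℂ ψ (ball 0 1))
    (hm : MapsTo ψ (ball 0 1) (ball 0 1)) {w ψ' : ℂ} (hw : ‖w‖ < 1) (hψ : HasDerivAt ψ ψ' w)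
    (h1 : 1 ≤ ‖ψ'‖ * (1 - ‖w‖ ^ 2)) (j : Fin n) :
    blochSemiPoly n (fun z : Fin n → ℂ => ψ (z j)) = 1 := by
  set g : (Fin n → ℂ) → ℂ := fun z => ψ (z j)
  have hg : IsBlochPoly n g := isBlochPoly_comp_apply hd hm j
  have hmg : MapsTo g (polydisk n) (ball 0 1) := hm.comp (mapsTo_apply_polydisk j)
  set z : Fin n → ℂ := Pi.single j w
  have hz : z ∈ polydisk n := single_mem_polydisk hw j
  have hzj : z j = w := by simp [z]
  have hderiv : fderiv ℂ g z (Pi.single j 1) = ψ' := by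
    rw [← hzj] at hψ
    have hgz : HasFDerivAt g (ψ' • ContinuousLinearMap.proj j) z :=
      hψ.comp_hasFDerivAt z (hasFDerivAt_apply (𝕜 := ℂ) j z)
    simp [hgz.fderiv]
  refine le_antisymm (blochSemiPoly_le_one_of_mapsTo_ball hg.1 hmg) ?_
  calc 1 ≤ ‖ψ'‖ * (1 - ‖w‖ ^ 2) := h1
    _ = ‖fderiv ℂ g z (Pi.single j 1)‖ * (1 - ‖z j‖ ^ 2) := by rw [hderiv, hzj]
    _ ≤ Qpoly n g z :=
      norm_fderiv_single_mul_le_Qpoly hz (norm_fderiv_le_of_mapsTo_ball hg.1 hmg hz) j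
    _ ≤ blochSemiPoly n g := Qpoly_le_blochSemiPoly hg hz

theorem isBlochPoly_apply (j : Fin n) : IsBlochPoly n fun z => z j :=
  isBlochPoly_comp_apply differentiableOn_id (mapsTo_id _) j

theorem blochSemiPoly_apply (j : Fin n) : blochSemiPoly n (fun z => z j) = 1 :=
  blochSemiPoly_comp_apply_eq_one differentiableOn_id (mapsTo_id _) (w := 0) (by simp)
    (hasDerivAt_id 0) (by simp) j

theorem isBlochPoly_diskMobius_apply {a : ℂ} (ha : ‖a‖ < 1) (j : Fin n) :
    IsBlochPoly n fun z => diskMobius a (z j) :=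
  isBlochPoly_comp_apply (differentiableOn_diskMobius ha) (mapsTo_diskMobius ha) j

theorem blochSemiPoly_diskMobius_apply {a : ℂ} (ha : ‖a‖ < 1) (j : Fin n) :
    blochSemiPoly n (fun z => diskMobius a (z j)) = 1 := by
  refine blochSemiPoly_comp_apply_eq_one (differentiableOn_diskMobius ha) (mapsTo_diskMobius ha)
    ha (hasDerivAt_diskMobius_self ha) (le_of_eq ?_) j
  have hpos : 0 < 1 - ‖a‖ ^ 2 := by nlinarith [norm_nonneg a]
  rw [norm_neg, norm_inv, norm_one_sub_conj_mul_self ha, inv_mul_cancel₀ hpos.ne']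

theorem fderiv_sum_mul_apply (c z u : Fin n → ℂ) :
    fderiv ℂ (fun z => ∑ k, c k * z k) z u = ∑ k, c k * u k := by
  have h : HasFDerivAt (fun z : Fin n → ℂ => ∑ k, c k * z k)
      (∑ k, c k • ContinuousLinearMap.proj k) z :=
    HasFDerivAt.fun_sum fun k _ => (hasFDerivAt_apply (𝕜 := ℂ) k z).const_mul (c k)
  simp [h.fderiv]

theorem norm_sum_mul_le_mul_sqrt_polyH {z : Fin n → ℂ} (hz : z ∈ polydisk n) (c u : Fin n → ℂ) :
    ‖∑ k, c k * u k‖ ≤ (∑ k, ‖c k‖) * √(polyH n z u) := by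
  rw [Finset.sum_mul]
  refine (norm_sum_le _ _).trans (Finset.sum_le_sum fun k _ => ?_)
  rw [norm_mul]
  exact mul_le_mul_of_nonneg_left ((norm_apply_le_mul_sqrt_polyH hz u k).trans
    (mul_le_of_le_one_left (Real.sqrt_nonneg _) (sub_le_self 1 (sq_nonneg _)))) (norm_nonneg _)

theorem isBlochPoly_sum_mul (c : Fin n → ℂ) : IsBlochPoly n fun z => ∑ k, c k * z k := by
  refine ⟨fun z _ => ?_, bddAbove_blochValuesPoly fun z hz =>
    Qpoly_le_of_le (M := ∑ k, ‖c k‖) (by positivity) fun u => ?_⟩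
  · fun_prop
  · rw [fderiv_sum_mul_apply]
    exact norm_sum_mul_le_mul_sqrt_polyH hz c u

theorem norm_le_blochSemiPoly_sum_mul (c : Fin n → ℂ) (j : Fin n) :
    ‖c j‖ ≤ blochSemiPoly n (fun z => ∑ k, c k * z k) := by
  have h0 := zero_mem_polydisk n
  calc ‖c j‖ = ‖fderiv ℂ (fun z => ∑ k, c k * z k) 0 (Pi.single j 1)‖ *
        (1 - ‖(0 : Fin n → ℂ) j‖ ^ 2) := by simp [fderiv_sum_mul_apply, Pi.single_apply]
    _ ≤ Qpoly n (fun z => ∑ k, c k * z k) 0 :=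
      norm_fderiv_single_mul_le_Qpoly h0 (fun u => by
        rw [fderiv_sum_mul_apply]; exact norm_sum_mul_le_mul_sqrt_polyH h0 c u) j
    _ ≤ blochSemiPoly n (fun z => ∑ k, c k * z k) :=
      Qpoly_le_blochSemiPoly (isBlochPoly_sum_mul c) h0

end TestFunctions

theorem necessary_conditions_isometry_polydisk_general (n : ℕ)
    (φ : (Fin n → ℂ) → Fin n → ℂ)
    (hmap : MapsTo φ (polydisk n) (polydisk n))
    (hiso : ∀ f : (Fin n → ℂ) → ℂ, IsBlochPoly n f →
      IsBlochPoly n (f ∘ φ) ∧ blochNormPoly n (f ∘ φ) = blochNormPoly n f) :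
    (∀ c : Fin n → ℂ, (∀ z ∈ polydisk n, ∑ j, c j * φ z j = 0) →
      ∀ j, c j = 0) ∧
    φ 0 = 0 ∧
    ∀ j : Fin n, blochSemiPoly n (fun z => φ z j) = 1 := by
  have hnorm : ∀ f, IsBlochPoly n f →
      ‖f (φ 0)‖ + blochSemiPoly n (f ∘ φ) = ‖f 0‖ + blochSemiPoly n f :=
    fun f hf => (hiso f hf).2
  have hzero : φ 0 = 0 := by
    funext j
    have ha : ‖φ 0 j‖ < 1 := hmap (zero_mem_polydisk n) j
    have hg := isBlochPoly_diskMobius_apply ha j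
    have hgφ : blochSemiPoly n ((fun z => diskMobius (φ 0 j) (z j)) ∘ φ) ≤ 1 :=
      blochSemiPoly_le_one_of_mapsTo_ball (hiso _ hg).1.1
        ((mapsTo_diskMobius ha).comp ((mapsTo_apply_polydisk j).comp hmap))
    have h := hnorm _ hg
    rw [blochSemiPoly_diskMobius_apply ha, diskMobius_self, Pi.zero_apply, diskMobius_zero,
      norm_zero, zero_add] at h
    exact norm_le_zero_iff.1 (by linarith)
  refine ⟨fun c hc j => ?_, hzero, fun j => ?_⟩
  · have h := hnorm _ (isBlochPoly_sum_mul c)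
    have hcφ := blochSemiPoly_eq_zero_of_eqOn (f := (fun z : Fin n → ℂ => ∑ k, c k * z k) ∘ φ) hc
    rw [hcφ, hzero] at h
    simp only [Pi.zero_apply, mul_zero, Finset.sum_const_zero, norm_zero, zero_add] at h
    exact norm_le_zero_iff.1 (h ▸ norm_le_blochSemiPoly_sum_mul c j)
  · simpa [Function.comp_def, hzero, blochSemiPoly_apply] using hnorm _ (isBlochPoly_apply j)

/-- Necessary conditions for `C_φ` to be an isometry on the Bloch space of the
polydisk: the components of `φ` are linearly independent over `ℂ`, `φ(0) = 0`,
and each component has Bloch seminorm `1`. -/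
theorem necessary_conditions_isometry_polydisk (n : ℕ)
    (φ : (Fin n → ℂ) → Fin n → ℂ)
    (hmap : MapsTo φ (polydisk n) (polydisk n))
    (hφ : DifferentiableOn ℂ φ (polydisk n))
    (hiso : ∀ f : (Fin n → ℂ) → ℂ, IsBlochPoly n f →
      IsBlochPoly n (f ∘ φ) ∧ blochNormPoly n (f ∘ φ) = blochNormPoly n f) :
    (∀ c : Fin n → ℂ, (∀ z ∈ polydisk n, ∑ j, c j * φ z j = 0) →
      ∀ j, c j = 0) ∧
    φ 0 = 0 ∧
    ∀ j : Fin n, blochSemiPoly n (fun z => φ z j) = 1 :=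
  necessary_conditions_isometry_polydisk_general n φ hmap hiso
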